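/- arXiv:1105.5175 — 4 statements merged into one kernel-verified Lean document; each statement's English description precedes it below -/
import Mathlib

section
/- For every integer n ≥ 1, C_{n−1,1} = 8^n · K_n. -/
/-!
Writing `c n = C n 1`, the array satisfies the convolution identity
`∑_{l ≤ n} c l · C (n-l) t = (t+1) C n (t+1) + (t+2) C n (t+2) - (6n+2t+2) C n t`,
proved by induction on `n` and then on `t`. At `t = 1` the right-hand side is
`c (n+1) - (6n+4) c n`, so `c (n+1) = (6n+4) c n + ∑_{l ≤ n} c l · c (n-l)`. Multiplying
Takács' recurrence by `8^(n+2)` shows that `8^(n+1) K (n+1)` obeys the same recurrence, and both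
sequences start at `1`.
-/

/-- Takács' sequence `K`: `K 0 = -1/2`,
`K n = ((3n-4)/4)·K (n-1) + ∑_{l=1}^{n-1} K l · K (n-l)` for `n ≥ 1`. -/
def K : ℕ → ℚ
  | 0 => -1/2
  | n + 1 =>
      ((3 * (n + 1 : ℚ) - 4) / 4) * K n +
        ∑ l ∈ (Finset.range n).attach, K (l.1 + 1) * K (n - l.1)
decreasing_by
  all_goals first
    | exact Nat.lt_succ_self n
    | (have := Finset.mem_range.mp l.2; omega)

/-- The array `C`: `C 0 0 = 1`, out-of-range values are `0`, and otherwise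
`C n t = C n (t-1) + (t+2)·C (n-1) (t+2)`. -/
def C : ℕ → ℕ → ℚ
  | 0, 0 => 1
  | 0, t + 1 => C 0 t
  | n + 1, 0 => 2 * C n 2
  | n + 1, t + 1 => C (n + 1) t + ((t + 1 : ℚ) + 2) * C n (t + 3)
termination_by n t => 3 * n + t

open Finset

lemma C_zero_left : ∀ t, C 0 t = 1
  | 0 => by rw [C]
  | t + 1 => by rw [C]; exact C_zero_left t

lemma C_succ_zero (n : ℕ) : C (n + 1) 0 = 2 * C n 2 := by rw [C]

lemma C_succ_succ (n t : ℕ) :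
    C (n + 1) (t + 1) = C (n + 1) t + ((t : ℚ) + 3) * C n (t + 3) := by
  rw [C]; ring

lemma K_succ (n : ℕ) :
    K (n + 1) = ((3 * ((n : ℚ) + 1) - 4) / 4) * K n +
      ∑ l ∈ range n, K (l + 1) * K (n - l) := by
  rw [K, sum_attach (range n) (fun l => K (l + 1) * K (n - l))]

lemma sum_C_one_mul_C_succ_zero (m : ℕ) :
    ∑ l ∈ range (m + 2), C l 1 * C (m + 1 - l) 0 =
      C (m + 1) 1 + 2 * ∑ l ∈ range (m + 1), C l 1 * C (m - l) 2 := by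
  rw [sum_range_succ, mul_sum, Nat.sub_self, C_zero_left, mul_one, add_comm]
  congr 1
  refine sum_congr rfl fun l hl => ?_
  rw [Nat.sub_add_comm (mem_range_succ_iff.mp hl), C_succ_zero]
  ring

lemma sum_C_one_mul_C_succ_succ (m t : ℕ) :
    ∑ l ∈ range (m + 2), C l 1 * C (m + 1 - l) (t + 1) =
      ∑ l ∈ range (m + 2), C l 1 * C (m + 1 - l) t +
        ((t : ℚ) + 3) * ∑ l ∈ range (m + 1), C l 1 * C (m - l) (t + 3) := by
  rw [sum_range_succ, sum_range_succ _ (m + 1), Nat.sub_self, C_zero_left, C_zero_left,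
    add_right_comm, mul_sum, ← sum_add_distrib]
  congr 1
  refine sum_congr rfl fun l hl => ?_
  rw [Nat.sub_add_comm (mem_range_succ_iff.mp hl), C_succ_succ]
  ring

lemma sum_C_one_mul_C (n t : ℕ) :
    ∑ l ∈ range (n + 1), C l 1 * C (n - l) t =
      ((t : ℚ) + 1) * C n (t + 1) + ((t : ℚ) + 2) * C n (t + 2) -
        (6 * n + 2 * t + 2) * C n t := by
  induction n generalizing t with
  | zero => simp [C_zero_left]; ring
  | succ m ihm =>
    induction t with
    | zero =>
      rw [sum_C_one_mul_C_succ_zero, ihm 2]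
      push_cast
      linear_combination -2 * C_succ_succ m 0 - 2 * C_succ_succ m 1 +
        (6 * (m : ℚ) + 6) * C_succ_zero m
    | succ t iht =>
      have h₀ := C_succ_succ m t
      have h₁ := C_succ_succ m (t + 1)
      have h₂ := C_succ_succ m (t + 2)
      rw [sum_C_one_mul_C_succ_succ, iht, ihm (t + 3)]
      push_cast [add_assoc] at h₁ h₂ ⊢
      linear_combination (6 * (m : ℚ) + 2 * t + 8) * h₀ - ((t : ℚ) + 3) * (h₁ + h₂)

lemma C_succ_one (n : ℕ) :
    C (n + 1) 1 = (6 * n + 4) * C n 1 + ∑ l ∈ range (n + 1), C l 1 * C (n - l) 1 := by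
  rw [sum_C_one_mul_C, C_succ_succ, C_succ_zero]
  push_cast
  ring

lemma C_one_eq_eight_pow_mul_K (n : ℕ) : C n 1 = 8 ^ (n + 1) * K (n + 1) := by
  induction n using Nat.strong_induction_on with
  | _ n ih =>
    rcases n with _ | m
    · rw [C_zero_left, K_succ, K]
      norm_num
    have hsum : ∑ l ∈ range (m + 1), C l 1 * C (m - l) 1 =
        8 ^ (m + 2) * ∑ l ∈ range (m + 1), K (l + 1) * K (m + 1 - l) := by
      rw [mul_sum]
      refine sum_congr rfl fun l hl => ?_
      have hlm : l ≤ m := mem_range_succ_iff.mp hl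
      rw [ih l (by omega), ih (m - l) (by omega), Nat.sub_add_comm hlm,
        show m + 2 = (l + 1) + (m - l + 1) by omega, pow_add]
      ring
    rw [C_succ_one, hsum, ih m (by omega), K_succ (m + 1)]
    push_cast
    ring

/-- for every `n ≥ 1`, `C_{n-1,1} = 8^n · K_n`. -/
theorem C_eq_eight_pow_mul_K (n : ℕ) (hn : 1 ≤ n) :
    C (n - 1) 1 = 8 ^ n * K n := by
  obtain ⟨m, rfl⟩ : ∃ m, n = m + 1 := ⟨n - 1, by omega⟩
  simpa using C_one_eq_eight_pow_mul_K m
end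

section
/- Let S be a weighted step set. Define, for each m ≥ 0, the polynomial F_m(q,u) = ∑_w wt(w)·q^{a(w)}·u^{h(w)} (sum over all meanders w of length m) in ℝ[q,u], and for 0 ≤ i ≤ c−1 the polynomial G_{i,m}(q) = ∑_w wt(w)·q^{a(w)} (sum over meanders of length m with final altitude i) in ℝ[q]. Then F_0(q,u) = 1, and for every m ≥ 1 the following identity holds in the Laurent polynomial ring ℝ[q][u,u^{−1}]: F_m(q,u) = S(uq)·F_{m−1}(q,uq) − ∑_{i=0}^{c−1} r_i(uq)·G_{i,m−1}(q), where F_{m−1}(q,uq) denotes F_{m−1} with u replaced by uq, S is the step polynomial evaluated at uq, and r_i(u) = u^i·(s_{−c}u^{−c} + s_{−c+1}u^{−c+1} + … + s_{−(i+1)}u^{−(i+1)}). -/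
open Finset

/-- `ℝ[q,q⁻¹]`, in which `q = T 1`. The generating polynomials below have only
nonnegative powers of `q`, i.e. they lie in the subring `ℝ[q]`. -/
abbrev Aq : Type := LaurentPolynomial ℝ

/-- `ℝ[q,q⁻¹][u,u⁻¹]`, in which `u = T 1`; it contains the ring `ℝ[q][u,u⁻¹]`
in which the stated identity takes place. -/
abbrev Bu : Type := LaurentPolynomial Aq

/-- The monomial `r·q^a·u^h` in `ℝ[q,q⁻¹][u,u⁻¹]`. -/
noncomputable def mono (r : ℝ) (a h : ℤ) : Bu :=
  LaurentPolynomial.C (LaurentPolynomial.C r * LaurentPolynomial.T a) *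
    LaurentPolynomial.T h

/-- The weight of a walk `w₀, …, w_m` of nonnegative integers:
the product of the weights of its steps. -/
noncomputable def wt (s : ℤ → ℝ) {m : ℕ} (w : Fin (m + 1) → ℕ) : ℝ :=
  ∏ i : Fin m, s ((w i.succ : ℤ) - (w i.castSucc : ℤ))

/-- `F_m(q,u) = ∑_w wt(w)·q^{a(w)}·u^{h(w)}`, the sum running over all meanders of
length `m` (walks of nonnegative integers starting at `0`; walks using a step of
weight `0` or a step outside `[-c,d]` contribute weight `0`, and every meander has
heights `≤ m·d`, so the finite index type `Fin (m·d+1)` captures all of them). -/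
noncomputable def Fm (s : ℤ → ℝ) (d m : ℕ) : Bu :=
  ∑ w : Fin (m + 1) → Fin (m * d + 1),
    if w 0 = 0 then
      mono (wt s (fun j => (w j : ℕ))) ((∑ j, (w j : ℕ) : ℕ) : ℤ)
        ((w (Fin.last m) : ℕ) : ℤ)
    else 0

/-- `F_m(q,uq) = ∑_w wt(w)·q^{a(w)+h(w)}·u^{h(w)}`, i.e. `F_m` with `u` replaced
by `uq`. -/
noncomputable def FmSub (s : ℤ → ℝ) (d m : ℕ) : Bu :=
  ∑ w : Fin (m + 1) → Fin (m * d + 1),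
    if w 0 = 0 then
      mono (wt s (fun j => (w j : ℕ)))
        (((∑ j, (w j : ℕ) : ℕ) : ℤ) + ((w (Fin.last m) : ℕ) : ℤ))
        ((w (Fin.last m) : ℕ) : ℤ)
    else 0

/-- `G_{i,m}(q) = ∑_w wt(w)·q^{a(w)}`, the sum running over meanders of length `m`
with final altitude `i`. -/
noncomputable def Gim (s : ℤ → ℝ) (d m i : ℕ) : Aq :=
  ∑ w : Fin (m + 1) → Fin (m * d + 1),
    if w 0 = 0 ∧ (w (Fin.last m) : ℕ) = i then
      LaurentPolynomial.C (wt s (fun j => (w j : ℕ))) *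
        LaurentPolynomial.T ((∑ j, (w j : ℕ) : ℕ) : ℤ)
    else 0

/-- `S(uq) = ∑_{i=-c}^{d} s_i·qⁱ·uⁱ`, the step polynomial evaluated at `uq`. -/
noncomputable def SSub (c d : ℕ) (s : ℤ → ℝ) : Bu :=
  ∑ i ∈ Finset.Icc (-(c : ℤ)) (d : ℤ), mono (s i) i i

/-- `r_i(uq)` where `r_i(u) = uⁱ·(s_{-c}u^{-c} + … + s_{-(i+1)}u^{-(i+1)})
= ∑_{j=i+1}^{c} s_{-j}·u^{i-j}`. -/
noncomputable def rSub (c : ℕ) (s : ℤ → ℝ) (i : ℕ) : Bu :=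
  ∑ j ∈ Finset.Icc ((i : ℤ) + 1) (c : ℤ), mono (s (-j)) ((i : ℤ) - j) ((i : ℤ) - j)

/-!
Appending a step `k` to a meander `v` of length `m - 1` gives the term
`wt(v)·s_k·q^{a(v)+h(v)+k}·u^{h(v)+k}`, which is the corresponding term of `S(uq)·F_{m-1}(q,uq)`.
So that product runs over all one-step extensions of meanders, and the extensions that are
meanders are those with `h(v) + k ≥ 0`. The others have `h(v) = i < c` and `-c ≤ k < -i`; for fixed
`v` they add up to `wt(v)·q^{a(v)}·r_i(uq)`, because `r_i(u)` is the part of `uⁱ·S(u)` with negative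
exponents. Heights above `(m-1)·d` are never reached by a walk of nonzero weight, so changing the
finite range of heights in the sums is harmless.
-/

lemma mono_mul (r r' : ℝ) (a h a' h' : ℤ) :
    mono r a h * mono r' a' h' = mono (r * r') (a + a') (h + h') := by
  simp only [mono, LaurentPolynomial.T_add, map_mul]
  ring

@[simp] lemma mono_zero (a h : ℤ) : mono 0 a h = 0 := by simp [mono]

lemma C_mul_mono (x : ℝ) (b : ℤ) (r : ℝ) (a h : ℤ) :
    LaurentPolynomial.C (LaurentPolynomial.C x * LaurentPolynomial.T b) * mono r a h
      = mono (x * r) (b + a) h := by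
  simpa [mono] using mono_mul x r b 0 a h

lemma wt_snoc (s : ℤ → ℝ) {m : ℕ} (w : Fin (m + 1) → ℕ) (t : ℕ) :
    wt s (Fin.snoc w t) = wt s w * s (t - w (Fin.last m)) := by
  simp [wt, Fin.prod_univ_castSucc, -Fin.castSucc_succ, Fin.succ_castSucc]

lemma le_mul_of_wt_ne_zero {s : ℤ → ℝ} {d : ℕ} (hs : ∀ i : ℤ, d < i → s i = 0) {m : ℕ}
    {w : Fin (m + 1) → ℕ} (h0 : w 0 = 0) (hw : wt s w ≠ 0) (j : Fin (m + 1)) :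
    w j ≤ j * d := by
  induction j using Fin.induction with
  | zero => simp [h0]
  | succ i ih =>
    have hstep : (w i.succ : ℤ) - w i.castSucc ≤ d := by
      by_contra! hlt
      exact hw (Finset.prod_eq_zero (Finset.mem_univ i) (hs _ hlt))
    simp only [Fin.val_succ, Fin.val_castSucc] at ih ⊢
    zify at ih ⊢
    linarith

lemma sum_fin_valued_snoc {M : Type*} [AddCommMonoid M] {n K : ℕ} (f : (Fin (n + 2) → ℕ) → M) :
    ∑ w : Fin (n + 2) → Fin K, f (fun j => w j) =
      ∑ v : Fin (n + 1) → Fin K, ∑ t : Fin K, f (Fin.snoc (fun j => (v j : ℕ)) t) := by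
  rw [← (Fin.snocEquiv fun _ => Fin K).sum_comp, Fintype.sum_prod_type_right]
  refine Finset.sum_congr rfl fun v _ => Finset.sum_congr rfl fun t _ => congrArg f ?_
  exact Fin.comp_snoc Fin.val v t

lemma sum_fin_valued_eq_of_bounded {M : Type*} [AddCommMonoid M] {m K K' : ℕ} (hK : K ≤ K')
    (f : (Fin m → ℕ) → M) (hf : ∀ w, (∃ j, K ≤ w j) → f w = 0) :
    ∑ w : Fin m → Fin K', f (fun j => w j) = ∑ w : Fin m → Fin K, f (fun j => w j) := by
  let e := (Fin.castLEEmb hK).arrowCongrRight (γ := Fin m)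
  rw [← Finset.sum_subset (Finset.subset_univ (Finset.univ.map e)), Finset.sum_map]
  · rfl
  · intro w _ hw
    apply hf
    by_contra! hlt
    exact hw (Finset.mem_map.2 ⟨fun j => ⟨w j, hlt j⟩, Finset.mem_univ _, rfl⟩)

lemma Fm_zero (s : ℤ → ℝ) (d : ℕ) : Fm s d 0 = 1 := by
  have : Subsingleton (Fin (0 * d + 1)) := by simp only [zero_mul, zero_add]; infer_instance
  rw [Fm, Fintype.sum_subsingleton _ 0]
  simp [wt, mono]

noncomputable def meanderTerm (s : ℤ → ℝ) {m : ℕ} (w : Fin (m + 1) → ℕ) : Bu :=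
  if w 0 = 0 then mono (wt s w) ((∑ j, w j : ℕ) : ℤ) (w (Fin.last m) : ℤ) else 0

lemma Fm_eq_sum_meanderTerm (s : ℤ → ℝ) (d m : ℕ) :
    Fm s d m = ∑ w : Fin (m + 1) → Fin (m * d + 1), meanderTerm s (fun j => (w j : ℕ)) := by
  unfold Fm
  simp only [meanderTerm, Fin.val_eq_zero_iff]

lemma meanderTerm_snoc (s : ℤ → ℝ) {m : ℕ} (w : Fin (m + 1) → ℕ) (t : ℕ) :
    meanderTerm s (Fin.snoc w t) =
      if w 0 = 0 then
        mono (wt s w * s (t - w (Fin.last m))) (((∑ j, w j : ℕ) : ℤ) + t) t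
      else 0 := by
  have h0 : (Fin.snoc w t : Fin (m + 2) → ℕ) 0 = w 0 := Fin.snoc_castSucc (i := 0) ..
  simp [meanderTerm, wt_snoc, Fin.sum_snoc, h0]

lemma meanderTerm_eq_zero_of_mul_lt {s : ℤ → ℝ} {d : ℕ} (hs : ∀ i : ℤ, d < i → s i = 0) {m : ℕ}
    {w : Fin (m + 1) → ℕ} (j : Fin (m + 1)) (hj : j * d < w j) : meanderTerm s w = 0 := by
  unfold meanderTerm
  split_ifs with h0
  · by_cases hw : wt s w = 0
    · rw [hw, mono_zero]
    · exact absurd (le_mul_of_wt_ne_zero hs h0 hw j) (not_le.2 hj)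
  · rfl

noncomputable def extensionSum (d : ℕ) (s : ℤ → ℝ) (n : ℕ) (P : ℤ → Finset ℤ) : Bu :=
  ∑ v : Fin (n + 1) → Fin (n * d + 1),
    if v 0 = 0 then
      ∑ k ∈ P ((v (Fin.last n) : ℕ) : ℤ),
        mono (wt s (fun j => (v j : ℕ)) * s k)
          (((∑ j, (v j : ℕ) : ℕ) : ℤ) + ((v (Fin.last n) : ℕ) : ℤ) + k)
          (((v (Fin.last n) : ℕ) : ℤ) + k)
    else 0

lemma extensionSum_filter_add_filter_not (d : ℕ) (s : ℤ → ℝ) (n : ℕ) (P : ℤ → Finset ℤ)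
    (p : ℤ → ℤ → Prop) [∀ h, DecidablePred (p h)] :
    extensionSum d s n (fun h => (P h).filter (p h)) +
      extensionSum d s n (fun h => (P h).filter fun k => ¬ p h k) = extensionSum d s n P := by
  unfold extensionSum
  rw [← Finset.sum_add_distrib]
  refine Finset.sum_congr rfl fun v _ => ?_
  split_ifs
  · exact Finset.sum_filter_add_sum_filter_not _ _ _
  · exact add_zero 0

lemma sum_fin_mono_step {c d : ℕ} {s : ℤ → ℝ}
    (hs : ∀ i : ℤ, (i < -(c : ℤ) ∨ (d : ℤ) < i) → s i = 0) {h N : ℕ} (hN : h + d < N)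
    (r : ℝ) (a : ℤ) :
    ∑ t : Fin N, mono (r * s (t - h)) (a + t) t =
      ∑ k ∈ (Finset.Icc (-(c : ℤ)) d).filter (fun k => 0 ≤ (h : ℤ) + k),
        mono (r * s k) (a + h + k) (h + k) := by
  rw [Fin.sum_univ_eq_sum_range (fun t : ℕ => mono (r * s (t - h)) (a + t) t)]
  symm
  refine Finset.sum_bij_ne_zero (fun k _ _ => (h + k).toNat) ?_ ?_ ?_ ?_
  · intro k hk _
    simp only [Finset.mem_filter, Finset.mem_Icc] at hk
    simp only [Finset.mem_range]
    omega
  · intro k hk _ k' hk' _ hkk'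
    simp only [Finset.mem_filter, Finset.mem_Icc] at hk hk'
    omega
  · intro t ht hne
    have hst : s (t - h) ≠ 0 := fun h0 => hne (by rw [h0, mul_zero, mono_zero])
    have hrange := mt (hs (t - h)) hst
    refine ⟨(t : ℤ) - h, ?_, ?_, by omega⟩
    · simp only [Finset.mem_filter, Finset.mem_Icc]
      omega
    · simpa using hne
  · intro k hk _
    simp only [Finset.mem_filter] at hk
    rw [Int.toNat_of_nonneg hk.2, add_sub_cancel_left, add_assoc]

lemma Fm_succ {c d : ℕ} {s : ℤ → ℝ} (hs : ∀ i : ℤ, (i < -(c : ℤ) ∨ (d : ℤ) < i) → s i = 0)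
    (n : ℕ) :
    Fm s d (n + 1) = extensionSum d s n
      (fun h => (Finset.Icc (-(c : ℤ)) d).filter fun k => 0 ≤ h + k) := by
  have hs_right : ∀ i : ℤ, d < i → s i = 0 := fun i hi => hs i (Or.inr hi)
  have hbound : n * d + 1 ≤ (n + 1) * d + 1 := by nlinarith
  rw [Fm_eq_sum_meanderTerm, sum_fin_valued_snoc,
    sum_fin_valued_eq_of_bounded hbound
      (fun v => ∑ t : Fin ((n + 1) * d + 1), meanderTerm s (Fin.snoc v (t : ℕ)))]
  · refine Finset.sum_congr rfl fun v _ => ?_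
    have hlast : (v (Fin.last n) : ℕ) + d < (n + 1) * d + 1 := by
      have := (v (Fin.last n)).isLt
      nlinarith
    simp only [meanderTerm_snoc, Fin.val_eq_zero_iff]
    split_ifs
    · push_cast
      exact sum_fin_mono_step hs hlast _ _
    · exact Finset.sum_const_zero
  · rintro v ⟨j, hj⟩
    refine Finset.sum_eq_zero fun t _ => meanderTerm_eq_zero_of_mul_lt hs_right j.castSucc ?_
    rw [Fin.snoc_castSucc, Fin.val_castSucc]
    have := Nat.mul_le_mul_right d (Nat.lt_succ_iff.1 j.isLt)
    omega

lemma SSub_mul_FmSub (c d : ℕ) (s : ℤ → ℝ) (n : ℕ) :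
    SSub c d s * FmSub s d n = extensionSum d s n (fun _ => Finset.Icc (-(c : ℤ)) d) := by
  rw [SSub, FmSub, Finset.sum_mul_sum, Finset.sum_comm]
  refine Finset.sum_congr rfl fun v _ => ?_
  split_ifs
  · refine Finset.sum_congr rfl fun k _ => ?_
    rw [mono_mul, mul_comm (s k), add_comm k, add_comm k]
  · simp

lemma rSub_eq_zero_of_le {c : ℕ} (s : ℤ → ℝ) {i : ℕ} (hi : c ≤ i) : rSub c s i = 0 :=
  Finset.sum_eq_zero fun j hj => by simp only [Finset.mem_Icc] at hj; omega

lemma rSub_eq_sum_filter_neg (c d : ℕ) (s : ℤ → ℝ) (i : ℕ) :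
    rSub c s i = ∑ k ∈ (Finset.Icc (-(c : ℤ)) d).filter (fun k => ¬ 0 ≤ (i : ℤ) + k),
      mono (s k) (i + k) (i + k) := by
  refine Finset.sum_nbij' (fun j => -j) (fun k => -k) ?_ ?_ ?_ ?_ ?_
  · intro j hj
    simp only [Finset.mem_filter, Finset.mem_Icc] at hj ⊢
    omega
  · intro k hk
    simp only [Finset.mem_filter, Finset.mem_Icc] at hk ⊢
    omega
  · exact fun j _ => neg_neg j
  · exact fun k _ => neg_neg k
  · intro j _
    rw [sub_eq_add_neg]

lemma sum_C_Gim_mul_rSub (c d : ℕ) (s : ℤ → ℝ) (n : ℕ) :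
    ∑ i ∈ Finset.range c, LaurentPolynomial.C (Gim s d n i) * rSub c s i =
      extensionSum d s n
        (fun h => (Finset.Icc (-(c : ℤ)) d).filter fun k => ¬ 0 ≤ h + k) := by
  simp only [Gim, map_sum, Finset.sum_mul]
  rw [Finset.sum_comm]
  refine Finset.sum_congr rfl fun v _ => ?_
  by_cases h0 : v 0 = 0
  · simp only [h0, true_and, apply_ite LaurentPolynomial.C, map_zero, ite_mul, zero_mul,
      Finset.sum_ite_eq, Finset.mem_range, if_true]
    rw [ite_eq_left_iff.2 fun hc => by rw [rSub_eq_zero_of_le s (not_lt.1 hc), mul_zero],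
      rSub_eq_sum_filter_neg c d, Finset.mul_sum]
    refine Finset.sum_congr rfl fun k _ => ?_
    rw [C_mul_mono, add_assoc]
  · simp [h0]

theorem fundamental_functional_equation_general
    (c d : ℕ) (s : ℤ → ℝ)
    (hsupp : ∀ i : ℤ, (i < -(c : ℤ) ∨ (d : ℤ) < i) → s i = 0) :
    Fm s d 0 = 1 ∧
    ∀ m : ℕ, 1 ≤ m →
      Fm s d m = SSub c d s * FmSub s d (m - 1) -
        ∑ i ∈ Finset.range c,
          LaurentPolynomial.C (Gim s d (m - 1) i) * rSub c s i := by
  refine ⟨Fm_zero s d, fun m hm => ?_⟩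
  obtain ⟨n, rfl⟩ := Nat.exists_eq_add_of_le' hm
  rw [Nat.add_sub_cancel, Fm_succ hsupp, SSub_mul_FmSub, sum_C_Gim_mul_rSub]
  exact eq_sub_of_add_eq (extensionSum_filter_add_filter_not d s n _ _)

/-- the fundamental functional equation of lattice-path counting:
`F_0(q,u) = 1` and, for `m ≥ 1`,
`F_m(q,u) = S(uq)·F_{m-1}(q,uq) − ∑_{i=0}^{c-1} r_i(uq)·G_{i,m-1}(q)`. -/
theorem fundamental_functional_equation
    (c d : ℕ) (hc : 0 < c) (hd : 0 < d) (s : ℤ → ℝ)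
    (hs : ∀ i, 0 ≤ s i) (hsc : 0 < s (-(c : ℤ))) (hsd : 0 < s (d : ℤ))
    (hsupp : ∀ i : ℤ, (i < -(c : ℤ) ∨ (d : ℤ) < i) → s i = 0) :
    Fm s d 0 = 1 ∧
    ∀ m : ℕ, 1 ≤ m →
      Fm s d m = SSub c d s * FmSub s d (m - 1) -
        ∑ i ∈ Finset.range c,
          LaurentPolynomial.C (Gim s d (m - 1) i) * rSub c s i :=
  fundamental_functional_equation_general c d s hsupp
end

section
/- Let R be a commutative ring, n ≥ 1, and let p_1, …, p_n be polynomials in one variable over R. Then in the polynomial ring R[x_1,…,x_n] there exists a symmetric polynomial φ such that det (p_j(x_i))_{1 ≤ i,j ≤ n} = ∏_{1 ≤ i < j ≤ n} (x_i − x_j) · φ; that is, the alternating polynomial det(p_j(x_i)) is divisible by the Vandermonde determinant and the quotient is symmetric in x_1,…,x_n. -/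
/-!
Substituting `xᵢ` for `xⱼ` (`i < j`) makes two rows of `det (pⱼ(xᵢ))` equal, so the determinant
is divisible by every `xᵢ - xⱼ`. These factors stay non-zero-divisors after such substitutions,
which lets the divisibilities be combined one factor at a time into divisibility by the
Vandermonde product `V`. Both the determinant and `V` are alternating, and `V` is a
non-zero-divisor, so the quotient is symmetric.
-/

open MvPolynomial
open scoped nonZeroDivisors

namespace MvPolynomial

variable {σ R : Type*} [CommRing R]

theorem X_sub_X_mem_nonZeroDivisors [DecidableEq σ] {i j : σ} (hij : i ≠ j) :
    (X i - X j : MvPolynomial σ R) ∈ (MvPolynomial σ R)⁰ := by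
  -- The substitution `X i ↦ X i + X j` is injective and sends `X i - X j` to `X i`.
  have hinv : (bind₁ (Function.update X i (X i - X j))).comp
      (bind₁ (Function.update X i (X i + X j))) = AlgHom.id R (MvPolynomial σ R) := by
    ext k
    by_cases hk : k = i
    · subst hk; simp [hij.symm]
    · simp [hk]
  refine mem_nonZeroDivisors_of_injective (f := bind₁ (Function.update X i (X i + X j)))
    (Function.LeftInverse.injective (g := bind₁ (Function.update X i (X i - X j)))
      fun f => by simpa using AlgHom.congr_fun hinv f) ?_
  simp [hij.symm, ← isRegular_iff_mem_nonZeroDivisors]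

theorem X_sub_X_dvd_of_rename_update_eq_zero [DecidableEq σ] {i j : σ} {f : MvPolynomial σ R}
    (hf : rename (Function.update id j i) f = 0) : X i - X j ∣ f := by
  set I : Ideal (MvPolynomial σ R) := Ideal.span {(X i - X j : MvPolynomial σ R)}
  have hmk : (Ideal.Quotient.mkₐ R I).comp (rename (Function.update id j i)) =
      Ideal.Quotient.mkₐ R I := by
    ext k
    by_cases hk : k = j
    · subst hk
      simp only [AlgHom.comp_apply, rename_X, Function.update_self, Ideal.Quotient.mkₐ_eq_mk]
      exact Ideal.Quotient.eq.mpr (Ideal.mem_span_singleton_self _)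
    · simp [hk]
  rw [← Ideal.mem_span_singleton, ← Ideal.Quotient.eq_zero_iff_mem]
  simpa [hf] using (AlgHom.congr_fun hmk f).symm

theorem prod_X_sub_X_dvd [LinearOrder σ] {S : Finset (σ × σ)} (hS : ∀ q ∈ S, q.1 < q.2)
    {f : MvPolynomial σ R} (hf : ∀ q ∈ S, rename (Function.update id q.2 q.1) f = 0) :
    ∏ q ∈ S, (X q.1 - X q.2 : MvPolynomial σ R) ∣ f := by
  induction S using Finset.induction_on with
  | empty => simp
  | insert a S haS ih =>
    obtain ⟨g, rfl⟩ := ih (fun q hq => hS q (Finset.mem_insert_of_mem hq))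
      (fun q hq => hf q (Finset.mem_insert_of_mem hq))
    have ha := hS a (Finset.mem_insert_self a S)
    -- Identifying `X a.2` with `X a.1` keeps every other factor `X q.1 - X q.2` a difference of
    -- two distinct variables, so the image of the product is still a non-zero-divisor.
    have hprod : rename (Function.update id a.2 a.1) (∏ q ∈ S, (X q.1 - X q.2 : MvPolynomial σ R))
        ∈ (MvPolynomial σ R)⁰ := by
      rw [map_prod]
      refine Submonoid.prod_mem _ fun q hq => ?_
      have hqa : q ≠ a := fun h => haS (h ▸ hq)
      have hq := hS q (Finset.mem_insert_of_mem hq)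
      simp only [map_sub, rename_X]
      apply X_sub_X_mem_nonZeroDivisors
      simp only [Function.update_apply, id]
      grind
    have hg : rename (Function.update id a.2 a.1) g = 0 := by
      have := hf a (Finset.mem_insert_self a S)
      rwa [map_mul, mul_left_mem_nonZeroDivisors_eq_zero_iff hprod] at this
    rw [Finset.prod_insert haS, mul_comm]
    exact mul_dvd_mul_left _ (X_sub_X_dvd_of_rename_update_eq_zero hg)

variable (σ R) in
noncomputable def vandermondeProd [Fintype σ] [LinearOrder σ] [LocallyFiniteOrderTop σ] :
    MvPolynomial σ R :=
  ∏ i : σ, ∏ j ∈ Finset.Ioi i, (X i - X j)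

section

variable [Fintype σ] [LinearOrder σ] [LocallyFiniteOrderTop σ]

theorem vandermondeProd_eq_prod_filter_lt :
    vandermondeProd σ R = ∏ q ∈ Finset.univ.filter (fun q : σ × σ => q.1 < q.2), (X q.1 - X q.2) :=
  (Finset.prod_finset_product' _ _ _ (by simp)).symm

theorem vandermondeProd_mem_nonZeroDivisors : vandermondeProd σ R ∈ (MvPolynomial σ R)⁰ :=
  Submonoid.prod_mem _ fun _ _ => Submonoid.prod_mem _ fun _ hj =>
    X_sub_X_mem_nonZeroDivisors (Finset.mem_Ioi.mp hj).ne

theorem vandermondeProd_dvd {f : MvPolynomial σ R}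
    (hf : ∀ i j, i < j → rename (Function.update id j i) f = 0) : vandermondeProd σ R ∣ f := by
  rw [vandermondeProd_eq_prod_filter_lt]
  exact prod_X_sub_X_dvd (fun q hq => (Finset.mem_filter.mp hq).2)
    fun q hq => hf q.1 q.2 (Finset.mem_filter.mp hq).2

end

variable [Fintype σ] [DecidableEq σ]

def IsAlternating (f : MvPolynomial σ R) : Prop :=
  ∀ e : Equiv.Perm σ, rename e f = Equiv.Perm.sign e • f

theorem IsAlternating.isSymmetric_of_eq_mul {f g φ : MvPolynomial σ R} (hf : f.IsAlternating)
    (hg : g.IsAlternating) (hg0 : g ∈ (MvPolynomial σ R)⁰) (h : f = g * φ) : φ.IsSymmetric := by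
  intro e
  have := congrArg (rename e) h
  rw [map_mul, hf e, hg e, h, smul_mul_assoc, smul_left_cancel_iff] at this
  exact (mul_cancel_left_mem_nonZeroDivisors hg0).mp this.symm

theorem rename_det_aeval_X (f : σ → σ) (p : σ → Polynomial R) :
    rename f (Matrix.of fun i j => Polynomial.aeval (X i : MvPolynomial σ R) (p j)).det =
    ((Matrix.of fun i j => Polynomial.aeval (X i) (p j)).submatrix f id).det := by
  rw [AlgHom.map_det]
  congr 1
  ext i j
  simp [← Polynomial.aeval_algHom_apply]

theorem isAlternating_det_aeval_X (p : σ → Polynomial R) :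
    (Matrix.of fun i j => Polynomial.aeval (X i : MvPolynomial σ R) (p j)).det.IsAlternating := by
  intro e
  rw [rename_det_aeval_X, Matrix.det_permute, Units.smul_def, zsmul_eq_mul]

theorem rename_update_det_aeval_X {i j : σ} (hij : i ≠ j) (p : σ → Polynomial R) :
    rename (Function.update id j i)
      (Matrix.of fun k l => Polynomial.aeval (X k : MvPolynomial σ R) (p l)).det = 0 := by
  rw [rename_det_aeval_X]
  exact Matrix.det_zero_of_row_eq hij (by funext k; simp [hij])

theorem vandermondeProd_eq_det (n : ℕ) :
    vandermondeProd (Fin n) R =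
      (Matrix.of fun i j : Fin n => Polynomial.aeval (X i : MvPolynomial (Fin n) R)
        ((-Polynomial.X : Polynomial R) ^ (j : ℕ))).det := by
  have := Matrix.det_vandermonde fun i : Fin n => (-X i : MvPolynomial (Fin n) R)
  simp only [neg_sub_neg] at this
  rw [vandermondeProd, ← this]
  congr 1
  ext i j
  simp [Matrix.vandermonde_apply]

theorem isAlternating_vandermondeProd (n : ℕ) : (vandermondeProd (Fin n) R).IsAlternating := by
  rw [vandermondeProd_eq_det]
  exact isAlternating_det_aeval_X _

end MvPolynomial

theorem det_eval_eq_vandermonde_mul_symmetric_general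
    (R : Type*) [CommRing R] (n : ℕ) (p : Fin n → Polynomial R) :
    ∃ φ : MvPolynomial (Fin n) R, φ.IsSymmetric ∧
      Matrix.det (Matrix.of fun i j : Fin n =>
          Polynomial.aeval (X i : MvPolynomial (Fin n) R) (p j)) =
        (∏ i : Fin n, ∏ j ∈ Finset.Ioi i, (X i - X j : MvPolynomial (Fin n) R)) * φ := by
  obtain ⟨φ, hφ⟩ := vandermondeProd_dvd (R := R) fun i j hij =>
    rename_update_det_aeval_X hij.ne p
  exact ⟨φ, (isAlternating_det_aeval_X p).isSymmetric_of_eq_mul (isAlternating_vandermondeProd n)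
    vandermondeProd_mem_nonZeroDivisors hφ, hφ⟩

/-- for polynomials `p₁, …, pₙ` over a commutative ring `R`, the
alternating polynomial `det (pⱼ(xᵢ))` is divisible by the Vandermonde determinant
`∏_{i<j} (xᵢ - xⱼ)`, with a quotient that is symmetric in `x₁, …, xₙ`. -/
theorem det_eval_eq_vandermonde_mul_symmetric
    (R : Type*) [CommRing R] (n : ℕ) (hn : 1 ≤ n) (p : Fin n → Polynomial R) :
    ∃ φ : MvPolynomial (Fin n) R, φ.IsSymmetric ∧
      Matrix.det (Matrix.of fun i j : Fin n =>
          Polynomial.aeval (X i : MvPolynomial (Fin n) R) (p j)) =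
        (∏ i : Fin n, ∏ j ∈ Finset.Ioi i, (X i - X j : MvPolynomial (Fin n) R)) * φ :=
  det_eval_eq_vandermonde_mul_symmetric_general R n p
end

section
/- Consider walks with steps ±1 (all weights equal to 1). For m ≥ 0 let B_m(q₊,q₋) = ∑_w q₊^{a⁺(w)} q₋^{a⁻(w)} ∈ ℤ[q₊,q₋], the sum over all bridges w of length m, and let G_m(q) = ∑_w q^{a(w)} ∈ ℤ[q], the sum over all excursions w of length m. Form the power series B(z) = ∑_{m≥0} B_m(q₊,q₋) z^m and G(z,q) = ∑_{m≥0} G_m(q) z^m in (ℤ[q₊,q₋])[[z]]. Then the identity B(z) · (G(z,q₊) + G(z,q₋) − G(z,q₊)·G(z,q₋)) = G(z,q₊) · G(z,q₋) holds in (ℤ[q₊,q₋])[[z]]. -/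
open Finset MvPolynomial

/-- The step `+1` or `-1` encoded by a boolean. -/
def stp (b : Bool) : ℤ := if b then 1 else -1

/-- The altitude `w_i` of the ±1 walk of length `m` encoded by its step
sequence `ε`. -/
def ht {m : ℕ} (ε : Fin m → Bool) (i : ℕ) : ℤ :=
  ∑ j ∈ Finset.range i, if h : j < m then stp (ε ⟨j, h⟩) else 0

/-- The positive area `a⁺(w) = ∑_{i=0}^{m} max(w_i, 0)` of a ±1 walk. -/
def aplus {m : ℕ} (ε : Fin m → Bool) : ℕ :=
  ∑ i ∈ Finset.range (m + 1), (ht ε i).toNat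

/-- The negative area `a⁻(w) = ∑_{i=0}^{m} max(-w_i, 0)` of a ±1 walk. -/
def aminus {m : ℕ} (ε : Fin m → Bool) : ℕ :=
  ∑ i ∈ Finset.range (m + 1), (-(ht ε i)).toNat

/-- The area `a(w) = ∑_{i=0}^{m} w_i` of an excursion (a nonnegative integer). -/
def aexc {m : ℕ} (ε : Fin m → Bool) : ℕ :=
  (∑ i ∈ Finset.range (m + 1), ht ε i).toNat

/-- `B_m(q₊,q₋) = ∑_w q₊^{a⁺(w)} q₋^{a⁻(w)}`, summed over all bridges of length `m`;
here `q₊ = X 0` and `q₋ = X 1` in `ℤ[q₊,q₋]`. -/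
noncomputable def Bm (m : ℕ) : MvPolynomial (Fin 2) ℤ :=
  ∑ ε : Fin m → Bool,
    if ht ε m = 0 then X 0 ^ aplus ε * X 1 ^ aminus ε else 0

/-- `G_m(q) = ∑_w q^{a(w)}`, summed over all excursions of length `m`, with `q`
taken to be the variable `X k` of `ℤ[q₊,q₋]`. -/
noncomputable def Gm (k : Fin 2) (m : ℕ) : MvPolynomial (Fin 2) ℤ :=
  ∑ ε : Fin m → Bool,
    if (∀ i ≤ m, 0 ≤ ht ε i) ∧ ht ε m = 0 then X k ^ aexc ε else 0

/-! Cutting a nonempty bridge at its first return to `0` splits it into an arch followed by a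
bridge, and both areas add up. An arch stays on one side of the axis, so with `A₊`, `A₋` the series
of positive and negative arches, `B = 1 + (A₊ + A₋) B` and `G₊ = 1 + A₊ G₊`, `G₋ = 1 + A₋ G₋`, where
`G₋ = G(z, q₋)` counts the nonpositive bridges by reflection. Eliminating `A₊` and `A₋` gives the
identity. -/

section Split

variable {α : Type*} {m k : ℕ}

def splitAt (hk : k ≤ m) : (Fin m → α) ≃ (Fin k → α) × (Fin (m - k) → α) :=
  (Equiv.arrowCongr ((finCongr (Nat.add_sub_of_le hk).symm).trans finSumFinEquiv.symm)
    (Equiv.refl α)).trans (Equiv.sumArrowEquivProdArrow _ _ α)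

@[simp]
lemma splitAt_fst (hk : k ≤ m) (ε : Fin m → α) (i : Fin k) :
    (splitAt hk ε).1 i = ε ⟨i, by omega⟩ :=
  rfl

@[simp]
lemma splitAt_snd (hk : k ≤ m) (ε : Fin m → α) (i : Fin (m - k)) :
    (splitAt hk ε).2 i = ε ⟨k + i, by omega⟩ :=
  rfl

end Split

section Heights

variable {m k i : ℕ}

lemma ht_zero (ε : Fin m → Bool) : ht ε 0 = 0 := by simp [ht]

lemma ht_succ (ε : Fin m → Bool) (h : i < m) : ht ε (i + 1) = ht ε i + stp (ε ⟨i, h⟩) := by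
  simp [ht, sum_range_succ, h]

lemma ht_not (ε : Fin m → Bool) (i : ℕ) : ht (fun j => !ε j) i = -ht ε i := by
  simp only [ht, ← sum_neg_distrib]
  refine sum_congr rfl fun j _ => ?_
  split_ifs
  · cases ε _ <;> simp [stp]
  · simp

lemma ht_splitAt_fst (hk : k ≤ m) (ε : Fin m → Bool) (hi : i ≤ k) :
    ht (splitAt hk ε).1 i = ht ε i :=
  sum_congr rfl fun j hj => by
    have : j < k := by rw [mem_range] at hj; omega
    simp [this, show j < m by omega]

lemma ht_add_splitAt_snd (hk : k ≤ m) (ε : Fin m → Bool) (hi : i ≤ m - k) :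
    ht ε (k + i) = ht ε k + ht (splitAt hk ε).2 i := by
  induction i with
  | zero => simp [ht_zero]
  | succ i ih =>
    rw [← add_assoc, ht_succ _ (by omega), ht_succ _ (by omega), ih (by omega), add_assoc,
      splitAt_snd]

end Heights

section Areas

variable {m k : ℕ}

lemma sum_ht_splitAt {M : Type*} [AddCommMonoid M] (g : ℤ → M) (hg : g 0 = 0) (hk : k ≤ m)
    (ε : Fin m → Bool) (h0 : ht ε k = 0) :
    ∑ i ∈ range (m + 1), g (ht ε i) =
      ∑ i ∈ range (k + 1), g (ht (splitAt hk ε).1 i) +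
        ∑ i ∈ range (m - k + 1), g (ht (splitAt hk ε).2 i) := by
  rw [show m + 1 = k + (m - k + 1) by omega, sum_range_add, sum_range_succ _ k,
    ht_splitAt_fst hk ε le_rfl, h0, hg, add_zero]
  congr 1
  · exact sum_congr rfl fun i hi => by rw [ht_splitAt_fst hk ε (by rw [mem_range] at hi; omega)]
  · exact sum_congr rfl fun i hi => by
      rw [ht_add_splitAt_snd hk ε (by rw [mem_range] at hi; omega), h0, zero_add]

lemma aplus_splitAt (hk : k ≤ m) (ε : Fin m → Bool) (h0 : ht ε k = 0) :
    aplus ε = aplus (splitAt hk ε).1 + aplus (splitAt hk ε).2 :=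
  sum_ht_splitAt _ rfl hk ε h0

lemma aminus_splitAt (hk : k ≤ m) (ε : Fin m → Bool) (h0 : ht ε k = 0) :
    aminus ε = aminus (splitAt hk ε).1 + aminus (splitAt hk ε).2 :=
  sum_ht_splitAt (fun x => (-x).toNat) rfl hk ε h0

lemma forall_ht_mem_iff_splitAt (T : Set ℤ) (hk : k ≤ m) (ε : Fin m → Bool)
    (h0 : ht ε k = 0) :
    (∀ i ≤ m, ht ε i ∈ T) ↔
      (∀ i ≤ k, ht (splitAt hk ε).1 i ∈ T) ∧ ∀ i ≤ m - k, ht (splitAt hk ε).2 i ∈ T := by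
  constructor
  · intro h
    refine ⟨fun i hi => ?_, fun i hi => ?_⟩
    · rw [ht_splitAt_fst hk ε hi]; exact h i (by omega)
    · rw [← zero_add (ht _ i), ← h0, ← ht_add_splitAt_snd hk ε hi]; exact h _ (by omega)
  · rintro ⟨hfst, hsnd⟩ i hi
    rcases le_or_gt i k with hik | hki
    · rw [← ht_splitAt_fst hk ε hik]; exact hfst i hik
    · obtain ⟨j, rfl⟩ := Nat.exists_eq_add_of_le hki.le
      rw [ht_add_splitAt_snd hk ε (by omega), h0, zero_add]; exact hsnd j (by omega)

lemma aplus_not (ε : Fin m → Bool) : aplus (fun i => !ε i) = aminus ε := by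
  simp only [aplus, aminus, ht_not]

lemma aminus_not (ε : Fin m → Bool) : aminus (fun i => !ε i) = aplus ε := by
  simp only [aplus, aminus, ht_not, neg_neg]

lemma aplus_eq_aexc (ε : Fin m → Bool) (h : ∀ i ≤ m, 0 ≤ ht ε i) : aplus ε = aexc ε := by
  rw [aexc, aplus, ← Int.toNat_natCast (∑ _ ∈ _, _), Nat.cast_sum]
  exact congrArg _ (sum_congr rfl fun i hi =>
    Int.toNat_of_nonneg (h i (by rw [mem_range] at hi; omega)))

lemma aminus_eq_zero (ε : Fin m → Bool) (h : ∀ i ≤ m, 0 ≤ ht ε i) : aminus ε = 0 :=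
  sum_eq_zero fun i hi => by simpa using h i (by rw [mem_range] at hi; omega)

end Areas

section Arches

variable {m k : ℕ}

def ReturnsFirstAt (ε : Fin m → Bool) (k : ℕ) : Prop :=
  0 < k ∧ ht ε k = 0 ∧ ∀ i, 0 < i → i < k → ht ε i ≠ 0

def IsArch (ε : Fin m → Bool) : Prop :=
  ReturnsFirstAt ε m

lemma ReturnsFirstAt.unique {ε : Fin m → Bool} {l : ℕ} (hk : ReturnsFirstAt ε k)
    (hl : ReturnsFirstAt ε l) : k = l := by
  by_contra hne
  rcases Nat.lt_or_gt_of_ne hne with h | h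
  · exact hl.2.2 k hk.1 h hk.2.1
  · exact hk.2.2 l hl.1 h hl.2.1

lemma exists_returnsFirstAt {ε : Fin m → Bool} (hm : 0 < m) (h : ht ε m = 0) :
    ∃ k ≤ m, ReturnsFirstAt ε k := by
  classical
  have hex : ∃ k, 0 < k ∧ ht ε k = 0 := ⟨m, hm, h⟩
  refine ⟨Nat.find hex, Nat.find_min' hex ⟨hm, h⟩, (Nat.find_spec hex).1,
    (Nat.find_spec hex).2, fun i hi hlt hi0 => Nat.find_min hex hlt ⟨hi, hi0⟩⟩

lemma returnsFirstAt_iff_isArch_splitAt (hk : k ≤ m) (ε : Fin m → Bool) :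
    ReturnsFirstAt ε k ↔ IsArch (splitAt hk ε).1 := by
  unfold IsArch ReturnsFirstAt
  constructor
  · rintro ⟨hpos, h0, hne⟩
    refine ⟨hpos, by rwa [ht_splitAt_fst hk ε le_rfl], fun i hi hik => ?_⟩
    rw [ht_splitAt_fst hk ε hik.le]; exact hne i hi hik
  · rintro ⟨hpos, h0, hne⟩
    refine ⟨hpos, by rwa [ht_splitAt_fst hk ε le_rfl] at h0, fun i hi hik => ?_⟩
    rw [← ht_splitAt_fst hk ε hik.le]; exact hne i hi hik

lemma IsArch.ht_one_ne_zero {ε : Fin m → Bool} (h : IsArch ε) : ht ε 1 ≠ 0 := by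
  have hm := h.1
  rw [← zero_add 1, ht_succ ε hm, ht_zero]
  cases ε ⟨0, hm⟩ <;> simp [stp]

lemma IsArch.not {ε : Fin m → Bool} (h : IsArch ε) : IsArch fun i => !ε i := by
  refine ⟨h.1, by rw [ht_not, h.2.1, neg_zero], fun i hi him => ?_⟩
  rw [ht_not, neg_ne_zero]; exact h.2.2 i hi him

lemma IsArch.ht_nonneg {ε : Fin m → Bool} (h : IsArch ε) (h1 : 0 ≤ ht ε 1) :
    ∀ i ≤ m, 0 ≤ ht ε i := by
  intro i
  induction i with
  | zero => simp [ht_zero]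
  | succ i ih =>
    intro hi
    rcases Nat.eq_zero_or_pos i with rfl | hpos
    · exact h1
    · have hne := h.2.2 i hpos (by omega)
      have hi0 := ih (by omega)
      rw [ht_succ ε (by omega)]
      cases ε ⟨i, by omega⟩ <;> simp only [stp] <;> omega

lemma IsArch.nonneg_or_nonpos {ε : Fin m → Bool} (h : IsArch ε) :
    (∀ i ≤ m, 0 ≤ ht ε i) ∨ ∀ i ≤ m, ht ε i ≤ 0 := by
  rcases le_total 0 (ht ε 1) with h1 | h1
  · exact Or.inl (h.ht_nonneg h1)
  · refine Or.inr fun i hi => ?_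
    have := h.not.ht_nonneg (by rw [ht_not]; omega) i hi
    rw [ht_not] at this; omega

lemma IsArch.not_nonneg_and_nonpos {ε : Fin m → Bool} (h : IsArch ε) :
    ¬((∀ i ≤ m, 0 ≤ ht ε i) ∧ ∀ i ≤ m, ht ε i ≤ 0) := fun ⟨hp, hn⟩ =>
  h.ht_one_ne_zero (le_antisymm (hn 1 h.1) (hp 1 h.1))

end Arches

section Sums

open scoped Classical

variable {R : Type*} [CommSemiring R] (p q : R) {m k : ℕ}

noncomputable def areaWeight (ε : Fin m → Bool) : R :=
  p ^ aplus ε * q ^ aminus ε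

/-- `T` confines the heights: `univ` gives all bridges, `Ici 0` excursions and `Iic 0` their
mirror images. -/
noncomputable def bridgeSum (T : Set ℤ) (m : ℕ) : R :=
  ∑ ε : Fin m → Bool, if ht ε m = 0 ∧ ∀ i ≤ m, ht ε i ∈ T then areaWeight p q ε else 0

noncomputable def archSum (T : Set ℤ) (m : ℕ) : R :=
  ∑ ε : Fin m → Bool, if IsArch ε ∧ ∀ i ≤ m, ht ε i ∈ T then areaWeight p q ε else 0

lemma areaWeight_splitAt (hk : k ≤ m) (ε : Fin m → Bool) (h0 : ht ε k = 0) :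
    areaWeight p q ε = areaWeight p q (splitAt hk ε).1 * areaWeight p q (splitAt hk ε).2 := by
  rw [areaWeight, areaWeight, areaWeight, aplus_splitAt hk ε h0, aminus_splitAt hk ε h0]
  ring

lemma archSum_mul_bridgeSum (T : Set ℤ) (hk : k ≤ m) :
    archSum p q T k * bridgeSum p q T (m - k) =
      ∑ ε : Fin m → Bool, if ReturnsFirstAt ε k ∧ ht ε m = 0 ∧ ∀ i ≤ m, ht ε i ∈ T
        then areaWeight p q ε else 0 := by
  rw [archSum, bridgeSum, sum_mul_sum, ← Fintype.sum_prod_type']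
  refine (Fintype.sum_equiv (splitAt hk) _ _ fun ε => ?_).symm
  rw [ite_zero_mul_ite_zero]
  by_cases h0 : ht ε k = 0
  · have hm : ht ε m = ht (splitAt hk ε).2 (m - k) := by
      rw [← zero_add (ht _ (m - k)), ← h0, ← ht_add_splitAt_snd hk ε le_rfl,
        Nat.add_sub_of_le hk]
    refine if_congr ?_ (areaWeight_splitAt p q hk ε h0) rfl
    rw [returnsFirstAt_iff_isArch_splitAt hk, hm, forall_ht_mem_iff_splitAt T hk ε h0]
    tauto
  · rw [if_neg fun h => h0 h.1.2.1,
      if_neg fun h => h0 ((returnsFirstAt_iff_isArch_splitAt hk ε).2 h.1.1).2.1]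

lemma bridgeSum_eq_sum_archSum_mul (T : Set ℤ) (hm : 0 < m) :
    bridgeSum p q T m = ∑ k ∈ range (m + 1), archSum p q T k * bridgeSum p q T (m - k) := by
  calc bridgeSum p q T m
      = ∑ ε : Fin m → Bool, ∑ k ∈ range (m + 1),
          if ReturnsFirstAt ε k ∧ ht ε m = 0 ∧ ∀ i ≤ m, ht ε i ∈ T
          then areaWeight p q ε else 0 := by
        refine sum_congr rfl fun ε _ => ?_
        by_cases hε : ht ε m = 0 ∧ ∀ i ≤ m, ht ε i ∈ T
        · obtain ⟨k, hkm, hk⟩ := exists_returnsFirstAt hm hε.1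
          rw [if_pos hε, sum_eq_single_of_mem k (by simpa [Nat.lt_succ_iff] using hkm)
            fun l _ hlk => if_neg fun hl => hlk (hl.1.unique hk), if_pos ⟨hk, hε⟩]
        · exact (if_neg hε).trans (sum_eq_zero fun k _ => if_neg fun h => hε h.2).symm
    _ = ∑ k ∈ range (m + 1), archSum p q T k * bridgeSum p q T (m - k) := by
        rw [sum_comm]
        exact sum_congr rfl fun k hk =>
          (archSum_mul_bridgeSum p q T (by simpa [Nat.lt_succ_iff] using hk)).symm

lemma bridgeSum_zero (T : Set ℤ) (hT : 0 ∈ T) : bridgeSum p q T 0 = 1 := by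
  simp [bridgeSum, ht_zero, hT, areaWeight, aplus, aminus]

lemma archSum_zero (T : Set ℤ) : archSum p q T 0 = 0 :=
  sum_eq_zero fun _ _ => if_neg fun h => lt_irrefl 0 h.1.1

lemma mk_bridgeSum_eq_one_add_mul (T : Set ℤ) (hT : 0 ∈ T) :
    PowerSeries.mk (bridgeSum p q T) =
      1 + PowerSeries.mk (archSum p q T) * PowerSeries.mk (bridgeSum p q T) := by
  ext m
  rw [map_add, PowerSeries.coeff_mul, Nat.sum_antidiagonal_eq_sum_range_succ_mk,
    PowerSeries.coeff_one]
  simp only [PowerSeries.coeff_mk]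
  rcases Nat.eq_zero_or_pos m with rfl | hm
  · simp [bridgeSum_zero p q T hT, archSum_zero]
  · rw [if_neg hm.ne', zero_add, bridgeSum_eq_sum_archSum_mul p q T hm]

lemma bridgeSum_neg (T : Set ℤ) : bridgeSum q p (-T) m = bridgeSum p q T m := by
  unfold bridgeSum
  refine Fintype.sum_equiv (Equiv.piCongrRight fun _ => Equiv.boolNot) _ _ fun ε => ?_
  have hε : (Equiv.piCongrRight fun _ => Equiv.boolNot) ε = fun i => !ε i := rfl
  congr 1
  · simp [hε, ht_not]
  · simp [hε, areaWeight, aplus_not, aminus_not, mul_comm]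

lemma archSum_univ :
    archSum p q Set.univ m = archSum p q (Set.Ici 0) m + archSum p q (Set.Iic 0) m := by
  rw [archSum, archSum, archSum, ← sum_add_distrib]
  refine sum_congr rfl fun ε _ => ?_
  by_cases h : IsArch ε
  · rcases h.nonneg_or_nonpos with hpos | hneg
    · rw [if_pos ⟨h, fun _ _ => trivial⟩, if_pos ⟨h, hpos⟩,
        if_neg fun h' => h.not_nonneg_and_nonpos ⟨hpos, h'.2⟩, add_zero]
    · rw [if_pos ⟨h, fun _ _ => trivial⟩, if_neg fun h' => h.not_nonneg_and_nonpos ⟨h'.2, hneg⟩,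
        if_pos ⟨h, hneg⟩, zero_add]
  · simp [h]

lemma mk_archSum_univ :
    PowerSeries.mk (archSum p q Set.univ) =
      PowerSeries.mk (archSum p q (Set.Ici 0)) + PowerSeries.mk (archSum p q (Set.Iic 0)) := by
  ext m
  simp [archSum_univ]

end Sums

lemma Bm_eq_bridgeSum : Bm = bridgeSum (X 0) (X 1) Set.univ := by
  funext m
  refine sum_congr rfl fun ε _ => ?_
  congr 1
  simp

lemma Gm_eq_bridgeSum (k : Fin 2) (q : MvPolynomial (Fin 2) ℤ) :
    Gm k = bridgeSum (X k) q (Set.Ici 0) := by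
  funext m
  refine sum_congr rfl fun ε _ => ?_
  by_cases h : ∀ i ≤ m, 0 ≤ ht ε i
  · congr 1
    · simp [and_comm]
    · rw [areaWeight, aminus_eq_zero ε h, aplus_eq_aexc ε h, pow_zero, mul_one]
  · rw [if_neg fun h' => h h'.1, if_neg fun h' => h h'.2]

lemma Gm_one_eq_bridgeSum : Gm 1 = bridgeSum (X 0) (X 1) (Set.Iic 0) := by
  funext m
  rw [Gm_eq_bridgeSum 1 (X 0), ← bridgeSum_neg, Set.neg_Ici, neg_zero]

lemma mul_add_sub_mul_eq_mul_of_eq_one_add {S : Type*} [CommRing S] {a b B G H : S}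
    (hB : B = 1 + (a + b) * B) (hG : G = 1 + a * G) (hH : H = 1 + b * H) :
    B * (G + H - G * H) = G * H := by
  linear_combination (G * H) * hB - (B * G) * hH - (B * H) * hG

/-- the bridge decomposition identity
`B(z)·(G(z,q₊) + G(z,q₋) − G(z,q₊)·G(z,q₋)) = G(z,q₊)·G(z,q₋)`
in `(ℤ[q₊,q₋])[[z]]`. -/
theorem bridge_decomposition :
    PowerSeries.mk Bm *
      (PowerSeries.mk (Gm 0) + PowerSeries.mk (Gm 1) -
        PowerSeries.mk (Gm 0) * PowerSeries.mk (Gm 1)) =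
    PowerSeries.mk (Gm 0) * PowerSeries.mk (Gm 1) := by
  have hB :=
    mk_bridgeSum_eq_one_add_mul (X 0 : MvPolynomial (Fin 2) ℤ) (X 1) Set.univ (Set.mem_univ 0)
  rw [mk_archSum_univ] at hB
  rw [Bm_eq_bridgeSum, Gm_eq_bridgeSum 0 (X 1), Gm_one_eq_bridgeSum]
  exact mul_add_sub_mul_eq_mul_of_eq_one_add hB (mk_bridgeSum_eq_one_add_mul _ _ _ Set.self_mem_Ici)
    (mk_bridgeSum_eq_one_add_mul _ _ _ Set.self_mem_Iic)
end
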